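/- (A bound for the bias.) If γ < 1/(α_B tr(H^q)), then bias := (1/N²) Σ_{t=0}^{N−1} Σ_{k=t}^{N−1} ⟨(I − γH^q)^{k−t} H^q, B_t⟩ satisfies bias ≤ [2α_B (‖w_0 − w^{q*}‖²_{I^q_{0:k*}} + Nγ ‖w_0 − w^{q*}‖²_{H^q_{k*:∞}}) / (Nγ (1 − γα_B tr(H^q)))] · (k*/N + Nγ² Σ_{i>k*} (λ_i^q)²) + (1/(γ²N²)) ‖w_0 − w^{q*}‖²_{(H^q_{0:k*})^{-1}} + ‖w_0 − w^{q*}‖²_{H^q_{k*:∞}}. -/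

import Mathlib

open MeasureTheory Matrix Finset

noncomputable section

/-- Entrywise expectation of a matrix-valued random variable. -/
def mex {Ω : Type*} [MeasurableSpace Ω] (μ : Measure Ω) {m n : Type*}
    (A : Ω → Matrix m n ℝ) : Matrix m n ℝ :=
  Matrix.of fun i j => ∫ ω, A ω i j ∂μ

/-- Entrywise expectation of a vector-valued random variable. -/
def vex {Ω : Type*} [MeasurableSpace Ω] (μ : Measure Ω) {n : Type*}
    (u : Ω → n → ℝ) : n → ℝ :=
  fun i => ∫ ω, u ω i ∂μ

/-- Loewner (positive semidefinite) order on real matrices: `loew A B ↔ A ⪯ B`. -/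
def loew {n : Type*} [Fintype n] (A B : Matrix n n ℝ) : Prop :=
  (B - A).PosSemidef

/-!
Write `B_t` in the eigenbasis `(vᵢ)` of `H`, with coordinates `q t i = vᵢᵀ B_t vᵢ`.
The fourth-moment assumption bounds one step of the operator by
`B_{t+1} ⪯ (I - γH) B_t (I - γH) + γ² α tr(H B_t) H`, i.e. by the scalar recursion
`q (t+1) i ≤ (1 - γλᵢ)² q t i + γ² α λᵢ ∑ⱼ λⱼ q t j`.
Every geometric sum of `1 - γλᵢ` with at most `N` terms is at most `cᵢ = min (1/(γλᵢ)) N`.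
Unrolling the recursion with this bound controls the cumulative loss `U = ∑_{t<N} tr(H B_t)` by
`U (1 - γα tr H) ≤ ∑ᵢ λᵢ cᵢ q 0 i`, and then the bias by `∑ᵢ λᵢ cᵢ² q 0 i + γ² α U ∑ᵢ λᵢ² cᵢ²`.
Using `cᵢ ≤ 1/(γλᵢ)` for the `k*` leading indices and `cᵢ ≤ N` for the others gives the bound.
-/

theorem transpose_sum_smul_vecMulVec {n ι : Type*} [Fintype ι] (v : ι → n → ℝ) (c : ι → ℝ) :
    (∑ i, c i • vecMulVec (v i) (v i))ᵀ = ∑ i, c i • vecMulVec (v i) (v i) := by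
  simp only [transpose_sum, transpose_smul, transpose_vecMulVec]

section Matrices

variable {n : Type*} [Fintype n]

theorem loew.dotProduct_mulVec_le {A B : Matrix n n ℝ} (h : loew A B) (x : n → ℝ) :
    x ⬝ᵥ (A *ᵥ x) ≤ x ⬝ᵥ (B *ᵥ x) := by
  have := h.dotProduct_mulVec_nonneg x
  simp only [star_trivial, sub_mulVec, dotProduct_sub] at this
  linarith

theorem one_sub_smul_mul_mul_one_sub_smul [DecidableEq n] (γ : ℝ) (M A : Matrix n n ℝ) :
    (1 - γ • M) * A * (1 - γ • M) = A - γ • (M * A + A * M) + γ ^ 2 • (M * A * M) := by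
  simp only [sub_mul, mul_sub, one_mul, mul_one, smul_mul_assoc, mul_smul_comm, smul_sub,
    smul_add, smul_smul]
  module

theorem dotProduct_vecMulVec_self_mulVec (u x : n → ℝ) :
    x ⬝ᵥ (vecMulVec u u *ᵥ x) = (u ⬝ᵥ x) ^ 2 := by
  rw [vecMulVec_mulVec, op_smul_eq_smul, dotProduct_smul, dotProduct_comm, smul_eq_mul, sq]

theorem one_sub_smul_mulVec_of_mulVec_eq_smul [DecidableEq n] {H : Matrix n n ℝ} {x : n → ℝ}
    {p : ℝ} (hx : H *ᵥ x = p • x) (γ : ℝ) : (1 - γ • H) *ᵥ x = (1 - γ * p) • x := by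
  rw [sub_mulVec, one_mulVec, smul_mulVec, hx, smul_smul, sub_smul, one_smul]

theorem pow_mulVec_eq_pow_smul [DecidableEq n] {P : Matrix n n ℝ} {x : n → ℝ} {p : ℝ}
    (hx : P *ᵥ x = p • x) (m : ℕ) : P ^ m *ᵥ x = p ^ m • x := by
  induction m with
  | zero => simp
  | succ m ih => rw [pow_succ, ← mulVec_mulVec, hx, mulVec_smul, ih, smul_smul, pow_succ']

theorem dotProduct_mul_mul_mulVec_of_mulVec_eq_smul {P : Matrix n n ℝ} (hP : Pᵀ = P)
    {x : n → ℝ} {p : ℝ} (hx : P *ᵥ x = p • x) (B : Matrix n n ℝ) :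
    x ⬝ᵥ ((P * B * P) *ᵥ x) = p ^ 2 * (x ⬝ᵥ (B *ᵥ x)) := by
  rw [← mulVec_mulVec, hx, mulVec_smul, ← mulVec_mulVec, dotProduct_smul, dotProduct_mulVec,
    ← hP, vecMul_transpose, hx, smul_dotProduct, smul_eq_mul, smul_eq_mul]
  ring

variable {ι : Type*} [Fintype ι] (v : ι → n → ℝ)

theorem sum_smul_vecMulVec_mulVec [DecidableEq ι]
    (hv : ∀ i j, v i ⬝ᵥ v j = if i = j then 1 else 0) (c : ι → ℝ) (j : ι) :
    (∑ i, c i • vecMulVec (v i) (v i)) *ᵥ v j = c j • v j := by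
  simp only [sum_mulVec, smul_mulVec, vecMulVec_mulVec, op_smul_eq_smul, hv, ite_smul,
    one_smul, zero_smul, smul_ite, smul_zero, sum_ite_eq', mem_univ, if_true]

theorem trace_sum_smul_vecMulVec_mul (c : ι → ℝ) (B : Matrix n n ℝ) :
    ((∑ i, c i • vecMulVec (v i) (v i)) * B).trace = ∑ i, c i * (v i ⬝ᵥ (B *ᵥ v i)) := by
  simp only [sum_mul, trace_sum, smul_mul, trace_smul, vecMulVec_mul, trace_vecMulVec,
    smul_eq_mul]
  exact sum_congr rfl fun i _ => by rw [dotProduct_mulVec, dotProduct_comm]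

theorem pow_mul_sum_smul_vecMulVec [DecidableEq n] {P : Matrix n n ℝ} {p : ι → ℝ}
    (hP : ∀ i, P *ᵥ v i = p i • v i) (c : ι → ℝ) (m : ℕ) :
    P ^ m * ∑ i, c i • vecMulVec (v i) (v i) = ∑ i, (c i * p i ^ m) • vecMulVec (v i) (v i) := by
  rw [mul_sum]
  refine sum_congr rfl fun i _ => ?_
  rw [Matrix.mul_smul, mul_vecMulVec, pow_mulVec_eq_pow_smul (hP i), smul_vecMulVec, smul_smul]

end Matrices

section Spectral

variable {n ι : Type*} [Fintype n] [DecidableEq n] [Fintype ι] [DecidableEq ι] {v : ι → n → ℝ}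
  {lam : ι → ℝ} {H : Matrix n n ℝ}

theorem one_sub_mul_nonneg_of_posSemidef (hv : ∀ i j, v i ⬝ᵥ v j = if i = j then 1 else 0)
    (hH : H = ∑ i, lam i • vecMulVec (v i) (v i)) {γ : ℝ} (h : (1 - γ • H).PosSemidef) (i : ι) :
    0 ≤ 1 - γ * lam i := by
  have hHv : H *ᵥ v i = lam i • v i := hH ▸ sum_smul_vecMulVec_mulVec v hv lam i
  simpa [one_sub_smul_mulVec_of_mulVec_eq_smul hHv, hv] using h.dotProduct_mulVec_nonneg (v i)

theorem dotProduct_mulVec_le_of_loew_conj (hv : ∀ i j, v i ⬝ᵥ v j = if i = j then 1 else 0)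
    (hH : H = ∑ i, lam i • vecMulVec (v i) (v i)) {γ s : ℝ} {B B' : Matrix n n ℝ}
    (h : loew B' ((1 - γ • H) * B * (1 - γ • H) + s • H)) (i : ι) :
    v i ⬝ᵥ (B' *ᵥ v i) ≤ (1 - γ * lam i) ^ 2 * (v i ⬝ᵥ (B *ᵥ v i)) + s * lam i := by
  have hHv : H *ᵥ v i = lam i • v i := hH ▸ sum_smul_vecMulVec_mulVec v hv lam i
  have hPt : (1 - γ • H)ᵀ = 1 - γ • H := by
    rw [transpose_sub, transpose_one, transpose_smul, hH, transpose_sum_smul_vecMulVec]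
  have := h.dotProduct_mulVec_le (v i)
  rwa [add_mulVec, dotProduct_add, dotProduct_mul_mul_mulVec_of_mulVec_eq_smul hPt
    (one_sub_smul_mulVec_of_mulVec_eq_smul hHv γ), smul_mulVec, hHv, dotProduct_smul,
    dotProduct_smul, hv, if_pos rfl, smul_eq_mul, smul_eq_mul, mul_one] at this

theorem trace_transpose_pow_mul_mul (hv : ∀ i j, v i ⬝ᵥ v j = if i = j then 1 else 0)
    (hH : H = ∑ i, lam i • vecMulVec (v i) (v i)) (γ : ℝ) (m : ℕ) (B : Matrix n n ℝ) :
    (((1 - γ • H) ^ m * H)ᵀ * B).trace =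
      ∑ i, lam i * (1 - γ * lam i) ^ m * (v i ⬝ᵥ (B *ᵥ v i)) := by
  subst hH
  have hPv := fun i =>
    one_sub_smul_mulVec_of_mulVec_eq_smul (sum_smul_vecMulVec_mulVec v hv lam i) γ
  rw [pow_mul_sum_smul_vecMulVec v hPv, transpose_sum_smul_vecMulVec,
    trace_sum_smul_vecMulVec_mul]

end Spectral

section Expectation

variable {Ω : Type*} [MeasurableSpace Ω] {ν : Measure Ω} {l m n : Type*}

theorem mex_apply (A : Ω → Matrix m n ℝ) (i : m) (j : n) : mex ν A i j = ∫ ω, A ω i j ∂ν := rfl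

theorem mex_const [IsProbabilityMeasure ν] (B : Matrix m n ℝ) : mex ν (fun _ => B) = B := by
  ext i j
  simp [mex_apply]

theorem mex_add {A B : Ω → Matrix m n ℝ} (hA : ∀ i j, Integrable (fun ω => A ω i j) ν)
    (hB : ∀ i j, Integrable (fun ω => B ω i j) ν) :
    mex ν (fun ω => A ω + B ω) = mex ν A + mex ν B := by
  ext i j
  exact integral_add (hA i j) (hB i j)

theorem mex_sub {A B : Ω → Matrix m n ℝ} (hA : ∀ i j, Integrable (fun ω => A ω i j) ν)
    (hB : ∀ i j, Integrable (fun ω => B ω i j) ν) :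
    mex ν (fun ω => A ω - B ω) = mex ν A - mex ν B := by
  ext i j
  exact integral_sub (hA i j) (hB i j)

theorem mex_smul (c : ℝ) (A : Ω → Matrix m n ℝ) : mex ν (fun ω => c • A ω) = c • mex ν A := by
  ext i j
  exact integral_const_mul c _

theorem integrable_mul_const_apply [Fintype m] {A : Ω → Matrix l m ℝ}
    (hA : ∀ i j, Integrable (fun ω => A ω i j) ν) (B : Matrix m n ℝ) (i : l) (j : n) :
    Integrable (fun ω => (A ω * B) i j) ν := by
  simp only [mul_apply]
  exact integrable_finsetSum _ fun k _ => (hA i k).mul_const _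

theorem integrable_const_mul_apply [Fintype m] {A : Ω → Matrix m n ℝ}
    (hA : ∀ i j, Integrable (fun ω => A ω i j) ν) (B : Matrix l m ℝ) (i : l) (j : n) :
    Integrable (fun ω => (B * A ω) i j) ν := by
  simp only [mul_apply]
  exact integrable_finsetSum _ fun k _ => (hA k j).const_mul _

theorem mex_mul_const [Fintype m] {A : Ω → Matrix l m ℝ}
    (hA : ∀ i j, Integrable (fun ω => A ω i j) ν) (B : Matrix m n ℝ) :
    mex ν (fun ω => A ω * B) = mex ν A * B := by
  ext i j
  simp only [mex_apply, mul_apply]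
  rw [integral_finsetSum _ fun k _ => (hA i k).mul_const _]
  exact sum_congr rfl fun k _ => integral_mul_const _ _

theorem mex_const_mul [Fintype m] {A : Ω → Matrix m n ℝ}
    (hA : ∀ i j, Integrable (fun ω => A ω i j) ν) (B : Matrix l m ℝ) :
    mex ν (fun ω => B * A ω) = B * mex ν A := by
  ext i j
  simp only [mex_apply, mul_apply]
  rw [integral_finsetSum _ fun k _ => (hA k j).const_mul _]
  exact sum_congr rfl fun k _ => integral_const_mul _ _

theorem dotProduct_mex_mulVec [Fintype n] {A : Ω → Matrix n n ℝ}
    (hA : ∀ i j, Integrable (fun ω => A ω i j) ν) (x : n → ℝ) :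
    x ⬝ᵥ (mex ν A *ᵥ x) = ∫ ω, x ⬝ᵥ (A ω *ᵥ x) ∂ν := by
  simp only [dotProduct, mulVec, mex_apply, mul_sum]
  rw [integral_finsetSum _ fun i _ => integrable_finsetSum _ fun j _ =>
    ((hA i j).mul_const _).const_mul _]
  refine sum_congr rfl fun i _ => ?_
  rw [integral_finsetSum _ fun j _ => ((hA i j).mul_const _).const_mul _]
  exact sum_congr rfl fun j _ => by rw [integral_const_mul, integral_mul_const]

theorem mex_posSemidef [Fintype n] {A : Ω → Matrix n n ℝ} (hpsd : ∀ ω, (A ω).PosSemidef)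
    (hA : ∀ i j, Integrable (fun ω => A ω i j) ν) : (mex ν A).PosSemidef := by
  refine .of_dotProduct_mulVec_nonneg ?_ fun x => ?_
  · ext i j
    simp only [conjTranspose_apply, star_trivial, mex_apply]
    exact integral_congr_ae (.of_forall fun ω => by simpa using (hpsd ω).1.apply i j)
  · rw [star_trivial, dotProduct_mex_mulVec hA]
    exact integral_nonneg fun ω => by simpa using (hpsd ω).dotProduct_mulVec_nonneg x

end Expectation

section QuantizedStep

variable {Ω : Type*} [MeasurableSpace Ω] {ν : Measure Ω} {n : Type*} [Fintype n] [DecidableEq n]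
  {S : Ω → Matrix n n ℝ} {γ : ℝ}

theorem integrable_apply_of_integrable_conj [IsFiniteMeasure ν] (hγ : γ ≠ 0)
    (hM : ∀ i j, Integrable (fun ω => (S ω * S ω) i j) ν)
    (hT : ∀ i j, Integrable (fun ω => ((1 - γ • S ω) * (1 - γ • S ω)) i j) ν) (i j : n) :
    Integrable (fun ω => S ω i j) ν := by
  have h : ∀ ω, ((1 : Matrix n n ℝ) i j - ((1 - γ • S ω) * (1 - γ • S ω)) i j +
      γ ^ 2 * (S ω * S ω) i j) / (2 * γ) = S ω i j := fun ω => by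
    have := one_sub_smul_mul_mul_one_sub_smul γ (S ω) 1
    simp only [mul_one, one_mul] at this
    rw [this]
    simp only [Matrix.add_apply, Matrix.sub_apply, Matrix.smul_apply, smul_eq_mul]
    field_simp
    ring
  exact ((((integrable_const _).sub (hT i j)).add ((hM i j).const_mul _)).div_const _).congr
    (.of_forall h)

theorem mex_one_sub_smul_mul_mul [IsProbabilityMeasure ν]
    (hS : ∀ i j, Integrable (fun ω => S ω i j) ν) {B : Matrix n n ℝ}
    (hM : ∀ i j, Integrable (fun ω => (S ω * B * S ω) i j) ν) :
    mex ν (fun ω => (1 - γ • S ω) * B * (1 - γ • S ω)) =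
      B - γ • (mex ν S * B + B * mex ν S) + γ ^ 2 • mex ν (fun ω => S ω * B * S ω) := by
  have hSB := integrable_mul_const_apply hS B
  have hBS := integrable_const_mul_apply hS B
  have hlin : ∀ i j, Integrable (fun ω => (γ • (S ω * B + B * S ω)) i j) ν := fun i j =>
    ((hSB i j).add (hBS i j)).const_mul γ
  simp_rw [one_sub_smul_mul_mul_one_sub_smul]
  rw [mex_add, mex_sub, mex_const, mex_smul, mex_add hSB hBS, mex_mul_const hS,
    mex_const_mul hS, mex_smul]
  · exact fun i j => integrable_const _
  · exact hlin
  · exact fun i j => (integrable_const _).sub (hlin i j)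
  · exact fun i j => (hM i j).const_mul _

theorem loew_mex_conj [IsProbabilityMeasure ν] {H : Matrix n n ℝ} (hH : H.IsHermitian)
    (hSH : mex ν S = H) (hS : ∀ i j, Integrable (fun ω => S ω i j) ν) {B : Matrix n n ℝ}
    (hB : B.PosSemidef) (hM : ∀ i j, Integrable (fun ω => (S ω * B * S ω) i j) ν) {α : ℝ}
    (hfourth : loew (mex ν fun ω => S ω * B * S ω) ((α * (H * B).trace) • H)) :
    loew (mex ν fun ω => (1 - γ • S ω) * B * (1 - γ • S ω))
      ((1 - γ • H) * B * (1 - γ • H) + (γ ^ 2 * (α * (H * B).trace)) • H) := by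
  have hHBH : (H * B * H).PosSemidef := by
    simpa only [hH.eq] using hB.conjTranspose_mul_mul_same H
  unfold loew
  convert (hfourth.add hHBH).smul (sq_nonneg γ) using 1
  rw [mex_one_sub_smul_mul_mul hS hM, hSH, one_sub_smul_mul_mul_one_sub_smul]
  module

theorem mex_one_sub_smul_mul_mul_posSemidef (hS : ∀ ω, (S ω).IsHermitian) {B : Matrix n n ℝ}
    (hB : B.PosSemidef)
    (hT : ∀ i j, Integrable (fun ω => ((1 - γ • S ω) * B * (1 - γ • S ω)) i j) ν) :
    (mex ν fun ω => (1 - γ • S ω) * B * (1 - γ • S ω)).PosSemidef := by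
  refine mex_posSemidef (fun ω => ?_) hT
  have hsym : (1 - γ • S ω)ᴴ = 1 - γ • S ω := by
    rw [conjTranspose_sub, conjTranspose_one, conjTranspose_smul, star_trivial, (hS ω).eq]
  have := hB.conjTranspose_mul_mul_same (1 - γ • S ω)
  rwa [hsym] at this

end QuantizedStep

theorem sum_range_le_of_le_mul_add {r : ℝ} (hr : 0 ≤ r) {q a : ℕ → ℝ}
    (hq : ∀ t, q (t + 1) ≤ r * q t + a t) (N : ℕ) :
    ∑ t ∈ range N, q t ≤ (∑ m ∈ range N, r ^ m) * q 0 +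
      ∑ s ∈ range N, (∑ m ∈ range (N - 1 - s), r ^ m) * a s := by
  induction N with
  | zero => simp
  | succ N ih =>
    have hshift : ∑ t ∈ range N, q (t + 1) ≤ r * ∑ t ∈ range N, q t + ∑ t ∈ range N, a t := by
      rw [mul_sum, ← sum_add_distrib]
      exact sum_le_sum fun t _ => hq t
    have hgeom : ∀ s ∈ range N, (∑ m ∈ range (N + 1 - 1 - s), r ^ m) * a s =
        r * ((∑ m ∈ range (N - 1 - s), r ^ m) * a s) + a s := fun s hs => by
      rw [show N + 1 - 1 - s = N - 1 - s + 1 by grind, geom_sum_succ]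
      ring
    rw [sum_range_succ', geom_sum_succ, sum_range_succ _ N, sum_congr rfl hgeom]
    simp only [sum_add_distrib, ← mul_sum, Nat.add_sub_cancel, Nat.sub_self, range_zero,
      sum_empty, zero_mul, add_zero]
    linarith [mul_le_mul_of_nonneg_left ih hr]

theorem sum_range_le_mul_of_le_mul_add {r C : ℝ} (hr : 0 ≤ r) {q a : ℕ → ℝ} (hq0 : 0 ≤ q 0)
    (ha : ∀ t, 0 ≤ a t) (hq : ∀ t, q (t + 1) ≤ r * q t + a t) {N : ℕ}
    (hC : ∀ K ≤ N, ∑ m ∈ range K, r ^ m ≤ C) :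
    ∑ t ∈ range N, q t ≤ C * (q 0 + ∑ t ∈ range N, a t) := by
  refine (sum_range_le_of_le_mul_add hr hq N).trans ?_
  rw [mul_add, mul_sum]
  gcongr with s
  · exact hC N le_rfl
  · exact ha s
  · exact hC _ (by omega)

theorem geom_sum_le_min {x : ℝ} (hx0 : 0 ≤ x) (hx1 : x < 1) {K N : ℕ} (hK : K ≤ N) :
    ∑ m ∈ range K, x ^ m ≤ min (1 - x)⁻¹ N := by
  refine le_min ?_ ?_
  · simpa [one_div] using geom_sum_Ico_le_of_lt_one (m := 0) (n := K) hx0 hx1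
  · calc ∑ m ∈ range K, x ^ m ≤ ∑ m ∈ range K, (1 : ℝ) :=
          sum_le_sum fun m _ => pow_le_one₀ hx0 hx1.le
      _ ≤ N := by simpa using hK

theorem geom_sum_one_sub_le_min {x : ℝ} (hx : 0 < x) (hx1 : 0 ≤ 1 - x) {K N : ℕ} (hK : K ≤ N) :
    ∑ m ∈ range K, (1 - x) ^ m ≤ min x⁻¹ N := by
  simpa only [sub_sub_cancel] using geom_sum_le_min hx1 (by linarith : 1 - x < 1) hK

theorem mul_lt_one_of_lt_one_div {a b : ℝ} (hb : 0 ≤ b) (h : a < 1 / b) : a * b < 1 := by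
  rcases hb.eq_or_lt with rfl | hb
  · simp
  · rwa [lt_div_iff₀ hb] at h

theorem sum_le_sum_add_sum_compl {ι : Type*} [Fintype ι] [DecidableEq ι] (s : Finset ι)
    {f g h : ι → ℝ} (hg : ∀ i ∈ s, f i ≤ g i) (hh : ∀ i ∈ sᶜ, f i ≤ h i) :
    ∑ i, f i ≤ ∑ i ∈ s, g i + ∑ i ∈ sᶜ, h i := by
  rw [← sum_add_sum_compl s f]
  exact add_le_add (sum_le_sum hg) (sum_le_sum hh)

section HeadTailSplit

variable {ι : Type*} [Fintype ι] [DecidableEq ι] {γ : ℝ} {N : ℕ} {lam b : ι → ℝ}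

theorem sum_mul_min_mul_le (hγ : 0 < γ) (hlam : ∀ i, 0 < lam i) (hb : ∀ i, 0 ≤ b i)
    (s : Finset ι) :
    ∑ i, lam i * min (γ * lam i)⁻¹ N * b i ≤ (∑ i ∈ s, b i) / γ + N * ∑ i ∈ sᶜ, lam i * b i := by
  rw [sum_div, mul_sum]
  refine sum_le_sum_add_sum_compl s (fun i _ => ?_) (fun i _ => ?_)
  · calc lam i * min (γ * lam i)⁻¹ N * b i ≤ lam i * (γ * lam i)⁻¹ * b i := by
          gcongr; exacts [hb i, (hlam i).le, min_le_left _ _]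
      _ = b i / γ := by field_simp [(hlam i).ne']
  · calc lam i * min (γ * lam i)⁻¹ N * b i ≤ lam i * N * b i := by
          gcongr; exacts [hb i, (hlam i).le, min_le_right _ _]
      _ = N * (lam i * b i) := by ring

theorem sum_mul_min_sq_mul_le (hγ : 0 < γ) (hlam : ∀ i, 0 < lam i) (hb : ∀ i, 0 ≤ b i)
    (s : Finset ι) :
    ∑ i, lam i * min (γ * lam i)⁻¹ N ^ 2 * b i ≤
      (∑ i ∈ s, b i / lam i) / γ ^ 2 + N ^ 2 * ∑ i ∈ sᶜ, lam i * b i := by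
  have hmin : ∀ i, 0 ≤ min (γ * lam i)⁻¹ N := fun i => le_min (by have := hlam i; positivity)
    (Nat.cast_nonneg N)
  rw [sum_div, mul_sum]
  refine sum_le_sum_add_sum_compl s (fun i _ => ?_) (fun i _ => ?_)
  · calc lam i * min (γ * lam i)⁻¹ N ^ 2 * b i ≤ lam i * (γ * lam i)⁻¹ ^ 2 * b i := by
          gcongr; exacts [hb i, (hlam i).le, hmin i, min_le_left _ _]
      _ = b i / lam i / γ ^ 2 := by field_simp [(hlam i).ne']
  · calc lam i * min (γ * lam i)⁻¹ N ^ 2 * b i ≤ lam i * N ^ 2 * b i := by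
          gcongr; exacts [hb i, (hlam i).le, hmin i, min_le_right _ _]
      _ = N ^ 2 * (lam i * b i) := by ring

theorem sum_sq_mul_min_sq_le (hγ : 0 < γ) (hlam : ∀ i, 0 < lam i) (s : Finset ι) :
    ∑ i, lam i ^ 2 * min (γ * lam i)⁻¹ N ^ 2 ≤ #s / γ ^ 2 + N ^ 2 * ∑ i ∈ sᶜ, lam i ^ 2 := by
  have hmin : ∀ i, 0 ≤ min (γ * lam i)⁻¹ N := fun i => le_min (by have := hlam i; positivity)
    (Nat.cast_nonneg N)
  rw [div_eq_mul_one_div, ← nsmul_eq_mul, ← sum_const, mul_sum]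
  refine sum_le_sum_add_sum_compl s (fun i _ => ?_) (fun i _ => ?_)
  · calc lam i ^ 2 * min (γ * lam i)⁻¹ N ^ 2 ≤ lam i ^ 2 * (γ * lam i)⁻¹ ^ 2 := by
          gcongr; exacts [hmin i, min_le_left _ _]
      _ = 1 / γ ^ 2 := by field_simp [(hlam i).ne']
  · calc lam i ^ 2 * min (γ * lam i)⁻¹ N ^ 2 ≤ lam i ^ 2 * N ^ 2 := by
          gcongr; exacts [hmin i, min_le_right _ _]
      _ = N ^ 2 * lam i ^ 2 := by ring

end HeadTailSplit

section CoordinateRecursion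

variable {ι : Type*} [Fintype ι] {γ α : ℝ} {N : ℕ} {lam : ι → ℝ} {q : ℕ → ι → ℝ}

structure IsBiasRecursion (γ α : ℝ) (lam : ι → ℝ) (q : ℕ → ι → ℝ) : Prop where
  gamma_pos : 0 < γ
  alpha_nonneg : 0 ≤ α
  lam_pos : ∀ i, 0 < lam i
  one_sub_nonneg : ∀ i, 0 ≤ 1 - γ * lam i
  nonneg : ∀ t i, 0 ≤ q t i
  step_le : ∀ t i, q (t + 1) i ≤
    (1 - γ * lam i) ^ 2 * q t i + γ ^ 2 * α * lam i * ∑ j, lam j * q t j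

theorem IsBiasRecursion.loss_nonneg (h : IsBiasRecursion γ α lam q) (t : ℕ) :
    0 ≤ ∑ j, lam j * q t j :=
  sum_nonneg fun j _ => mul_nonneg (h.lam_pos j).le (h.nonneg t j)

theorem IsBiasRecursion.geom_sum_le_min (h : IsBiasRecursion γ α lam q) (i : ι) {K : ℕ}
    (hK : K ≤ N) : ∑ m ∈ range K, (1 - γ * lam i) ^ m ≤ min (γ * lam i)⁻¹ N :=
  geom_sum_one_sub_le_min (mul_pos h.gamma_pos (h.lam_pos i)) (h.one_sub_nonneg i) hK

theorem IsBiasRecursion.sum_range_le (h : IsBiasRecursion γ α lam q) (i : ι) :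
    ∑ t ∈ range N, q t i ≤ min (γ * lam i)⁻¹ N *
      (q 0 i + γ ^ 2 * α * lam i * ∑ t ∈ range N, ∑ j, lam j * q t j) := by
  have hα := h.alpha_nonneg
  have hp1 : 1 - γ * lam i ≤ 1 := by nlinarith [mul_pos h.gamma_pos (h.lam_pos i)]
  rw [mul_sum]
  refine sum_range_le_mul_of_le_mul_add (sq_nonneg _) (h.nonneg 0 i)
    (fun t => mul_nonneg (by have := h.lam_pos i; positivity) (h.loss_nonneg t))
    (fun t => h.step_le t i) fun K hK =>
      le_trans (sum_le_sum fun m _ => ?_) (h.geom_sum_le_min i hK)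
  rw [← pow_mul]
  exact pow_le_pow_of_le_one (h.one_sub_nonneg i) hp1 (by omega)

theorem IsBiasRecursion.loss_mul_le (h : IsBiasRecursion γ α lam q) :
    (∑ t ∈ range N, ∑ j, lam j * q t j) * (1 - γ * α * ∑ i, lam i) ≤
      ∑ i, lam i * min (γ * lam i)⁻¹ N * q 0 i := by
  have hγ := h.gamma_pos
  have hα := h.alpha_nonneg
  set U := ∑ t ∈ range N, ∑ j, lam j * q t j
  have hU : 0 ≤ U := sum_nonneg fun t _ => h.loss_nonneg t
  have hcoord : ∀ i, lam i * ∑ t ∈ range N, q t i ≤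
      lam i * min (γ * lam i)⁻¹ N * q 0 i + γ * α * U * lam i := fun i => by
    have hcap : lam i * min (γ * lam i)⁻¹ N ≤ γ⁻¹ := by
      calc lam i * min (γ * lam i)⁻¹ N ≤ lam i * (γ * lam i)⁻¹ :=
            mul_le_mul_of_nonneg_left (min_le_left _ _) (h.lam_pos i).le
        _ = γ⁻¹ := by field_simp [(h.lam_pos i).ne']
    calc lam i * ∑ t ∈ range N, q t i
        ≤ lam i * (min (γ * lam i)⁻¹ N * (q 0 i + γ ^ 2 * α * lam i * U)) :=
          mul_le_mul_of_nonneg_left (h.sum_range_le i) (h.lam_pos i).le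
      _ = lam i * min (γ * lam i)⁻¹ N * q 0 i +
            γ ^ 2 * α * lam i * U * (lam i * min (γ * lam i)⁻¹ N) := by ring
      _ ≤ lam i * min (γ * lam i)⁻¹ N * q 0 i + γ ^ 2 * α * lam i * U * γ⁻¹ := by
          gcongr
          exact mul_nonneg (mul_nonneg (by positivity) (h.lam_pos i).le) hU
      _ = lam i * min (γ * lam i)⁻¹ N * q 0 i + γ * α * U * lam i := by
          field_simp
  have hswap : U = ∑ i, lam i * ∑ t ∈ range N, q t i := by
    simp only [U, sum_comm (s := range N), mul_sum]
  have := sum_le_sum fun i (_ : i ∈ univ) => hcoord i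
  rw [← hswap, sum_add_distrib, ← mul_sum] at this
  linarith

theorem IsBiasRecursion.bias_le (h : IsBiasRecursion γ α lam q) :
    ∑ t ∈ range N, ∑ k ∈ Ico t N, ∑ i, lam i * (1 - γ * lam i) ^ (k - t) * q t i ≤
      ∑ i, lam i * min (γ * lam i)⁻¹ N ^ 2 * q 0 i +
        γ ^ 2 * α * (∑ t ∈ range N, ∑ j, lam j * q t j) *
          ∑ i, lam i ^ 2 * min (γ * lam i)⁻¹ N ^ 2 := by
  set U := ∑ t ∈ range N, ∑ j, lam j * q t j
  have hweight : ∀ i, 0 ≤ lam i * min (γ * lam i)⁻¹ N := fun i => by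
    have hl := h.lam_pos i
    have hγ := h.gamma_pos
    exact mul_nonneg hl.le (le_min (by positivity) (by positivity))
  have hinner : ∀ t ∈ range N, ∑ k ∈ Ico t N, ∑ i, lam i * (1 - γ * lam i) ^ (k - t) * q t i ≤
      ∑ i, lam i * min (γ * lam i)⁻¹ N * q t i := fun t _ => by
    rw [sum_comm]
    refine sum_le_sum fun i _ => ?_
    rw [← sum_mul, ← mul_sum, sum_Ico_eq_sum_range]
    simp only [Nat.add_sub_cancel_left]
    gcongr
    · exact h.nonneg t i
    · exact (h.lam_pos i).le
    · exact h.geom_sum_le_min i (Nat.sub_le N t)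
  calc _ ≤ ∑ t ∈ range N, ∑ i, lam i * min (γ * lam i)⁻¹ N * q t i := sum_le_sum hinner
    _ = ∑ i, lam i * min (γ * lam i)⁻¹ N * ∑ t ∈ range N, q t i := by
        rw [sum_comm]
        simp only [mul_sum]
    _ ≤ ∑ i, lam i * min (γ * lam i)⁻¹ N *
          (min (γ * lam i)⁻¹ N * (q 0 i + γ ^ 2 * α * lam i * U)) :=
        sum_le_sum fun i _ => mul_le_mul_of_nonneg_left (h.sum_range_le i) (hweight i)
    _ = _ := by
        simp only [mul_add, sum_add_distrib, mul_sum]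
        congr 1 <;> exact sum_congr rfl fun i _ => by ring

theorem IsBiasRecursion.bias_div_sq_le [DecidableEq ι] {k : ℕ} {b : ι → ℝ}
    (h : IsBiasRecursion γ α lam q) (hN : 0 < N) (hq0 : ∀ i, q 0 i = b i)
    (hstep : γ * α * ∑ i, lam i < 1) (s : Finset ι) (hs : #s ≤ k) :
    1 / (N : ℝ) ^ 2 *
        ∑ t ∈ range N, ∑ k ∈ Ico t N, ∑ i, lam i * (1 - γ * lam i) ^ (k - t) * q t i ≤
      2 * α * ((∑ i ∈ s, b i) + N * γ * ∑ i ∈ sᶜ, lam i * b i) /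
          (N * γ * (1 - γ * α * ∑ i, lam i)) * (k / N + N * γ ^ 2 * ∑ i ∈ sᶜ, lam i ^ 2) +
        1 / (γ ^ 2 * N ^ 2) * ∑ i ∈ s, b i / lam i + ∑ i ∈ sᶜ, lam i * b i := by
  have hγ := h.gamma_pos
  have hα := h.alpha_nonneg
  have hNr : (0 : ℝ) < N := by exact_mod_cast hN
  have hb : ∀ i, 0 ≤ b i := fun i => hq0 i ▸ h.nonneg 0 i
  have hbias := h.bias_le (N := N)
  have hloss := h.loss_mul_le (N := N)
  simp only [hq0] at hbias hloss
  set U := ∑ t ∈ range N, ∑ j, lam j * q t j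
  set D := 1 - γ * α * ∑ i, lam i
  set A₁ := ∑ i ∈ s, b i
  set A₂ := ∑ i ∈ sᶜ, lam i * b i
  set V := ∑ i ∈ sᶜ, lam i ^ 2
  have hU : 0 ≤ U := sum_nonneg fun t _ => h.loss_nonneg t
  have hD : 0 < D := by linarith
  have hUD : γ * (U * D) ≤ A₁ + N * γ * A₂ := by
    calc γ * (U * D) ≤ γ * (A₁ / γ + N * A₂) :=
          mul_le_mul_of_nonneg_left (hloss.trans (sum_mul_min_mul_le hγ h.lam_pos hb s)) hγ.le
      _ = A₁ + N * γ * A₂ := by field_simp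
  have hαU : α * U / N ≤ 2 * α * (A₁ + N * γ * A₂) / (N * γ * D) := by
    have hA : 0 ≤ A₁ + N * γ * A₂ := by linarith [mul_nonneg hγ.le (mul_nonneg hU hD.le)]
    rw [div_le_div_iff₀ hNr (by positivity)]
    linarith [mul_le_mul_of_nonneg_left hUD (mul_nonneg hα hNr.le),
      mul_nonneg (mul_nonneg hα hNr.le) hA]
  have hk : (#s : ℝ) / γ ^ 2 ≤ k / γ ^ 2 := by gcongr
  calc 1 / (N : ℝ) ^ 2 * _
      ≤ 1 / (N : ℝ) ^ 2 * ((∑ i ∈ s, b i / lam i) / γ ^ 2 + N ^ 2 * A₂ +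
          γ ^ 2 * α * U * (k / γ ^ 2 + N ^ 2 * V)) := by
        gcongr
        refine hbias.trans (add_le_add (sum_mul_min_sq_mul_le hγ h.lam_pos hb s) ?_)
        exact mul_le_mul_of_nonneg_left ((sum_sq_mul_min_sq_le hγ h.lam_pos s).trans
          (by linarith)) (by positivity)
    _ = α * U / N * (k / N + N * γ ^ 2 * V) + 1 / (γ ^ 2 * N ^ 2) * ∑ i ∈ s, b i / lam i +
          A₂ := by
        field_simp
        ring
    _ ≤ _ := by gcongr

end CoordinateRecursion

theorem bias_bound_general
    (d N : ℕ) (hN : 0 < N)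
    (γ : ℝ) (hγ : 0 < γ)
    -- the randomness of one quantized batch; S = (1/B) X^{qT} X^q
    (Ωs : Type) [MeasurableSpace Ωs] (ν : Measure Ωs) [IsProbabilityMeasure ν]
    (S : Ωs → Matrix (Fin d) (Fin d) ℝ)
    (hSpsd : ∀ ω, (S ω).PosSemidef)
    (Hq : Matrix (Fin d) (Fin d) ℝ) (hHqpd : Hq.PosDef)
    (hSmean : mex ν S = Hq)
    -- γ is small enough that I − γH^q ⪰ 0
    (hcontr : ((1 : Matrix (Fin d) (Fin d) ℝ) - γ • Hq).PosSemidef)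
    -- entrywise integrability of the operator integrands
    (hIntM : ∀ A : Matrix (Fin d) (Fin d) ℝ, ∀ i j : Fin d,
      Integrable (fun ω => (S ω * A * S ω) i j) ν)
    (hIntT : ∀ A : Matrix (Fin d) (Fin d) ℝ, ∀ i j : Fin d,
      Integrable (fun ω =>
        (((1 : Matrix (Fin d) (Fin d) ℝ) - γ • S ω) * A *
          ((1 : Matrix (Fin d) (Fin d) ℝ) - γ • S ω)) i j) ν)
    -- fourth-moment assumption: M_B^q ∘ A ⪯ α_B tr(H^q A) H^q for PSD A
    (αB : ℝ) (hαB : 0 < αB)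
    (hfourth : ∀ A : Matrix (Fin d) (Fin d) ℝ, A.PosSemidef →
      loew (mex ν (fun ω => S ω * A * S ω)) ((αB * (Hq * A).trace) • Hq))
    -- initial bias matrix
    (w0 wq : Fin d → ℝ)
    (B0 : Matrix (Fin d) (Fin d) ℝ)
    (hB0 : B0 = vecMulVec (w0 - wq) (w0 - wq))
    (Bseq : ℕ → Matrix (Fin d) (Fin d) ℝ)
    (hBseq0 : Bseq 0 = B0)
    (hBseqStep : ∀ t : ℕ, Bseq (t + 1) =
      mex ν (fun ω => ((1 : Matrix (Fin d) (Fin d) ℝ) - γ • S ω) * Bseq t *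
        ((1 : Matrix (Fin d) (Fin d) ℝ) - γ • S ω)))
    -- eigendecomposition of H^q and effective dimension k*
    (lam : Fin d → ℝ) (v : Fin d → Fin d → ℝ)
    (hlampos : ∀ i, 0 < lam i)
    (hortho : ∀ i j : Fin d, v i ⬝ᵥ v j = if i = j then (1 : ℝ) else 0)
    (hspec : Hq = ∑ i, lam i • vecMulVec (v i) (v i))
    (kstar : ℕ)
    (hstep : γ < 1 / (αB * Hq.trace)) :
    1 / ((N : ℝ) ^ 2) *
        ∑ t ∈ Finset.range N, ∑ k ∈ Finset.Ico t N,
          ((((1 : Matrix (Fin d) (Fin d) ℝ) - γ • Hq) ^ (k - t) * Hq)ᵀ * Bseq t).trace ≤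
      2 * αB *
          ((∑ i ∈ Finset.univ.filter (fun i : Fin d => (i : ℕ) < kstar), ((w0 - wq) ⬝ᵥ v i) ^ 2) +
            (N : ℝ) * γ * ∑ i ∈ Finset.univ.filter (fun i : Fin d => kstar ≤ (i : ℕ)), lam i * ((w0 - wq) ⬝ᵥ v i) ^ 2) /
          ((N : ℝ) * γ * (1 - γ * αB * Hq.trace)) *
        ((kstar : ℝ) / (N : ℝ) +
          (N : ℝ) * γ ^ 2 * ∑ i ∈ Finset.univ.filter (fun i : Fin d => kstar ≤ (i : ℕ)), lam i ^ 2) +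
      1 / (γ ^ 2 * (N : ℝ) ^ 2) *
        ∑ i ∈ Finset.univ.filter (fun i : Fin d => (i : ℕ) < kstar), ((w0 - wq) ⬝ᵥ v i) ^ 2 / lam i +
      ∑ i ∈ Finset.univ.filter (fun i : Fin d => kstar ≤ (i : ℕ)), lam i * ((w0 - wq) ⬝ᵥ v i) ^ 2 := by
  have htrHB : ∀ B, (Hq * B).trace = ∑ j, lam j * (v j ⬝ᵥ (B *ᵥ v j)) :=
    fun B => hspec ▸ trace_sum_smul_vecMulVec_mul v lam B
  have htr : Hq.trace = ∑ i, lam i := by simpa [hortho] using htrHB 1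
  have hS := integrable_apply_of_integrable_conj hγ.ne' (by simpa using hIntM 1)
    (by simpa using hIntT 1)
  have hB : ∀ t, (Bseq t).PosSemidef := fun t => by
    induction t with
    | zero => simpa [hBseq0, hB0] using posSemidef_vecMulVec_self_star (w0 - wq)
    | succ t ih =>
      exact hBseqStep t ▸ mex_one_sub_smul_mul_mul_posSemidef (fun ω => (hSpsd ω).1) ih (hIntT _)
  have hcoord : IsBiasRecursion γ αB lam fun t i => v i ⬝ᵥ (Bseq t *ᵥ v i) := by
    refine ⟨hγ, hαB.le, hlampos, one_sub_mul_nonneg_of_posSemidef hortho hspec hcontr,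
      fun t i => by simpa using (hB t).dotProduct_mulVec_nonneg (v i), fun t i => ?_⟩
    have := dotProduct_mulVec_le_of_loew_conj hortho hspec (hBseqStep t ▸ loew_mex_conj
      hHqpd.isHermitian hSmean hS (hB t) (hIntM _) (hfourth _ (hB t))) i
    rw [htrHB] at this
    linarith
  have hsmall : γ * αB * ∑ i, lam i < 1 := by
    rw [mul_assoc, ← htr]
    exact mul_lt_one_of_lt_one_div (mul_nonneg hαB.le hHqpd.posSemidef.trace_nonneg) hstep
  have hcompl : univ.filter (fun i : Fin d => kstar ≤ (i : ℕ)) =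
      (univ.filter fun i : Fin d => (i : ℕ) < kstar)ᶜ := by
    ext; simp
  simp only [trace_transpose_pow_mul_mul hortho hspec, htr, hcompl]
  exact hcoord.bias_div_sq_le hN
    (fun i => by rw [hBseq0, hB0, dotProduct_vecMulVec_self_mulVec]) hsmall _
    (by simp [Fin.card_filter_val_lt])

theorem bias_bound
    (d N : ℕ) (hN : 0 < N)
    (γ : ℝ) (hγ : 0 < γ)
    -- the randomness of one quantized batch; S = (1/B) X^{qT} X^q
    (Ωs : Type) [MeasurableSpace Ωs] (ν : Measure Ωs) [IsProbabilityMeasure ν]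
    (S : Ωs → Matrix (Fin d) (Fin d) ℝ)
    (hSpsd : ∀ ω, (S ω).PosSemidef)
    (Hq : Matrix (Fin d) (Fin d) ℝ) (hHqpd : Hq.PosDef)
    (hSmean : mex ν S = Hq)
    -- γ is small enough that I − γH^q ⪰ 0
    (hcontr : ((1 : Matrix (Fin d) (Fin d) ℝ) - γ • Hq).PosSemidef)
    -- entrywise integrability of the operator integrands
    (hIntM : ∀ A : Matrix (Fin d) (Fin d) ℝ, ∀ i j : Fin d,
      Integrable (fun ω => (S ω * A * S ω) i j) ν)
    (hIntT : ∀ A : Matrix (Fin d) (Fin d) ℝ, ∀ i j : Fin d,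
      Integrable (fun ω =>
        (((1 : Matrix (Fin d) (Fin d) ℝ) - γ • S ω) * A *
          ((1 : Matrix (Fin d) (Fin d) ℝ) - γ • S ω)) i j) ν)
    -- fourth-moment assumption: M_B^q ∘ A ⪯ α_B tr(H^q A) H^q for PSD A
    (αB : ℝ) (hαB : 0 < αB)
    (hfourth : ∀ A : Matrix (Fin d) (Fin d) ℝ, A.PosSemidef →
      loew (mex ν (fun ω => S ω * A * S ω)) ((αB * (Hq * A).trace) • Hq))
    -- initial bias matrix
    (w0 wq : Fin d → ℝ)
    (B0 : Matrix (Fin d) (Fin d) ℝ)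
    (hB0 : B0 = vecMulVec (w0 - wq) (w0 - wq))
    (Bseq : ℕ → Matrix (Fin d) (Fin d) ℝ)
    (hBseq0 : Bseq 0 = B0)
    (hBseqStep : ∀ t : ℕ, Bseq (t + 1) =
      mex ν (fun ω => ((1 : Matrix (Fin d) (Fin d) ℝ) - γ • S ω) * Bseq t *
        ((1 : Matrix (Fin d) (Fin d) ℝ) - γ • S ω)))
    -- eigendecomposition of H^q and effective dimension k*
    (lam : Fin d → ℝ) (v : Fin d → Fin d → ℝ)
    (hlam : ∀ i j : Fin d, i ≤ j → lam j ≤ lam i)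
    (hlampos : ∀ i, 0 < lam i)
    (hortho : ∀ i j : Fin d, v i ⬝ᵥ v j = if i = j then (1 : ℝ) else 0)
    (hspec : Hq = ∑ i, lam i • vecMulVec (v i) (v i))
    (kstar : ℕ)
    (hkstar : ∀ i : Fin d, (i : ℕ) < kstar ↔ 1 / ((N : ℝ) * γ) ≤ lam i)
    (hstep : γ < 1 / (αB * Hq.trace)) :
    1 / ((N : ℝ) ^ 2) *
        ∑ t ∈ Finset.range N, ∑ k ∈ Finset.Ico t N,
          ((((1 : Matrix (Fin d) (Fin d) ℝ) - γ • Hq) ^ (k - t) * Hq)ᵀ * Bseq t).trace ≤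
      2 * αB *
          ((∑ i ∈ Finset.univ.filter (fun i : Fin d => (i : ℕ) < kstar), ((w0 - wq) ⬝ᵥ v i) ^ 2) +
            (N : ℝ) * γ * ∑ i ∈ Finset.univ.filter (fun i : Fin d => kstar ≤ (i : ℕ)), lam i * ((w0 - wq) ⬝ᵥ v i) ^ 2) /
          ((N : ℝ) * γ * (1 - γ * αB * Hq.trace)) *
        ((kstar : ℝ) / (N : ℝ) +
          (N : ℝ) * γ ^ 2 * ∑ i ∈ Finset.univ.filter (fun i : Fin d => kstar ≤ (i : ℕ)), lam i ^ 2) +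
      1 / (γ ^ 2 * (N : ℝ) ^ 2) *
        ∑ i ∈ Finset.univ.filter (fun i : Fin d => (i : ℕ) < kstar), ((w0 - wq) ⬝ᵥ v i) ^ 2 / lam i +
      ∑ i ∈ Finset.univ.filter (fun i : Fin d => kstar ≤ (i : ℕ)), lam i * ((w0 - wq) ⬝ᵥ v i) ^ 2 :=
  bias_bound_general d N hN γ hγ Ωs ν S hSpsd Hq hHqpd hSmean hcontr hIntM hIntT αB hαB hfourth w0
    wq B0 hB0 Bseq hBseq0 hBseqStep lam v hlampos hortho hspec kstar hstep
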